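/- arXiv:math/0605696 — 5 statements merged into one kernel-verified Lean document; each statement's English description precedes it below -/
import Mathlib

section
/- Let k ≥ 1 and let m ≥ 1 be a natural number. If m has more than k distinct prime factors, then ∑_{d | m} μ(d) (log(m/d))^k = 0. Moreover, if m = p_1 p_2 ⋯ p_k is squarefree with exactly k distinct prime factors p_1, …, p_k, then ∑_{d | m} μ(d) (log(m/d))^k = k! · (log p_1)(log p_2)⋯(log p_k). -/
/-!
A squarefree divisor of `m` is `∏ p ∈ t, p` for a set `t` of prime factors of `m`, with Möbius
value `(-1)^|t|` and `log (m / d) = log m - ∑ p ∈ t, log p`. So the sum is the iterated backward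
difference of `x ↦ x ^ k`, one difference of step `log p` for each prime `p ∣ m`, evaluated at
`log m`. A difference of step `c` lowers the degree of a polynomial by one and multiplies its
leading coefficient by `c` times the degree: more than `k` differences kill `x ^ k`, exactly `k`
of them leave the constant `k! ∏ log p`.
-/

open ArithmeticFunction Finset

section AlternatingPowerSum

variable {ι R : Type*} [CommRing R]

/-- The iterated backward difference `∇_{w i₁} ⋯ ∇_{w iₙ}` of `x ↦ x ^ k` at `L`, where
`s = {i₁, …, iₙ}` and `∇_c f x = f x - f (x - c)`. -/
def alternatingPowerSum (w : ι → R) (s : Finset ι) (k : ℕ) (L : R) : R :=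
  ∑ t ∈ s.powerset, (-1) ^ t.card * (L - ∑ i ∈ t, w i) ^ k

theorem alternatingPowerSum_insert [DecidableEq ι] {w : ι → R} {s : Finset ι} {a : ι}
    (ha : a ∉ s) (k : ℕ) (L : R) :
    alternatingPowerSum w (insert a s) k L =
      alternatingPowerSum w s k L - alternatingPowerSum w s k (L - w a) := by
  rw [alternatingPowerSum, sum_powerset_insert ha, alternatingPowerSum, alternatingPowerSum,
    sub_eq_add_neg, ← sum_neg_distrib]
  congr 1
  refine sum_congr rfl fun t ht => ?_
  have hat : a ∉ t := fun h => ha (mem_powerset.mp ht h)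
  rw [card_insert_of_notMem hat, sum_insert hat, pow_succ]
  ring

theorem alternatingPowerSum_sub (w : ι → R) (s : Finset ι) (k : ℕ) (L c : R) :
    alternatingPowerSum w s k (L - c) =
      ∑ j ∈ range (k + 1), (k.choose j : R) * (-c) ^ (k - j) * alternatingPowerSum w s j L := by
  simp only [alternatingPowerSum, mul_sum]
  rw [sum_comm]
  refine sum_congr rfl fun t _ => ?_
  rw [show L - c - ∑ i ∈ t, w i = (L - ∑ i ∈ t, w i) + -c by ring, add_pow, mul_sum]
  refine sum_congr rfl fun j _ => ?_
  ring

theorem alternatingPowerSum_of_le [DecidableEq ι] (w : ι → R) {s : Finset ι} {k : ℕ}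
    (hk : k ≤ s.card) (L : R) :
    alternatingPowerSum w s k L = if k = s.card then (k.factorial : R) * ∏ i ∈ s, w i else 0 := by
  induction s using Finset.induction_on generalizing k L with
  | empty => simp_all [alternatingPowerSum]
  | @insert a s ha ih =>
    rw [alternatingPowerSum_insert ha, card_insert_of_notMem ha]
    rw [card_insert_of_notMem ha] at hk
    rcases hk.lt_or_eq with hlt | rfl
    · rw [ih (by omega), ih (by omega), sub_self, if_neg hlt.ne]
    · -- in the binomial expansion of `∇_{w a}`, only the term `j = s.card` survives
      have lower : ∀ j ∈ range (s.card + 1), ((s.card + 1).choose j : R) *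
          (-w a) ^ (s.card + 1 - j) * alternatingPowerSum w s j L =
          if j = s.card then (s.card + 1 : R) * -w a * (s.card.factorial * ∏ i ∈ s, w i)
          else 0 := by
        intro j hj
        rw [ih (Nat.lt_succ_iff.mp (mem_range.mp hj))]
        split_ifs with hjs
        · subst hjs
          rw [Nat.choose_succ_self_right, Nat.add_sub_cancel_left, pow_one, Nat.cast_succ]
        · rw [mul_zero]
      rw [alternatingPowerSum_sub, sum_range_succ, sum_congr rfl lower, sum_ite_eq',
        if_pos (self_mem_range_succ _), Nat.choose_self, Nat.sub_self, if_pos rfl,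
        prod_insert ha, Nat.factorial_succ]
      push_cast
      ring

end AlternatingPowerSum

theorem moebius_prod_of_forall_prime {t : Finset ℕ} (ht : ∀ p ∈ t, p.Prime) :
    moebius (∏ p ∈ t, p) = (-1) ^ t.card := by
  rw [isMultiplicative_moebius.map_prod_of_subset_primeFactors _ t (Nat.primeFactors_prod ht).ge,
    prod_congr rfl fun p hp => moebius_apply_prime (ht p hp), prod_const]

theorem sum_divisors_moebius_mul {R : Type*} [CommRing R] {m : ℕ} (hm : m ≠ 0) (f : ℕ → R) :
    ∑ d ∈ m.divisors, (moebius d : R) * f d =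
      ∑ t ∈ m.primeFactors.powerset, (-1) ^ t.card * f (∏ p ∈ t, p) := by
  have hsupp : ∀ d ∈ m.divisors, (moebius d : R) * f d ≠ 0 → Squarefree d := fun d _ hd =>
    by_contra fun h => hd (by rw [moebius_eq_zero_of_not_squarefree h, Int.cast_zero, zero_mul])
  rw [← sum_filter_of_ne hsupp, Nat.sum_divisors_filter_squarefree hm, Nat.factors_eq,
    List.toFinset_coe, Nat.toFinset_factors]
  refine sum_congr rfl fun t ht => ?_
  have hprime : ∀ p ∈ t, p.Prime := fun p hp =>
    Nat.prime_of_mem_primeFactors (mem_powerset.mp ht hp)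
  rw [prod_val, Function.id_def, moebius_prod_of_forall_prime hprime, Int.cast_pow, Int.cast_neg,
    Int.cast_one]

theorem sum_moebius_mul_log_div_pow {m : ℕ} (hm : m ≠ 0) (k : ℕ) :
    ∑ d ∈ m.divisors, (moebius d : ℝ) * Real.log ((m : ℝ) / (d : ℝ)) ^ k =
      alternatingPowerSum (fun p : ℕ => Real.log p) m.primeFactors k (Real.log m) := by
  rw [sum_divisors_moebius_mul hm, alternatingPowerSum]
  refine sum_congr rfl fun t ht => ?_
  have hp0 : ∀ p ∈ t, (p : ℝ) ≠ 0 := fun p hp =>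
    Nat.cast_ne_zero.mpr (Nat.prime_of_mem_primeFactors (mem_powerset.mp ht hp)).ne_zero
  rw [Nat.cast_prod, Real.log_div (Nat.cast_ne_zero.mpr hm) (prod_ne_zero_iff.mpr hp0),
    Real.log_prod hp0]

theorem moebius_log_sum_general (k m : ℕ) (hm : 1 ≤ m) :
    (k < m.primeFactors.card →
      ∑ d ∈ m.divisors, (moebius d : ℝ) * (Real.log ((m : ℝ) / (d : ℝ))) ^ k = 0) ∧
    (Squarefree m → m.primeFactors.card = k →
      ∑ d ∈ m.divisors, (moebius d : ℝ) * (Real.log ((m : ℝ) / (d : ℝ))) ^ k =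
        (k.factorial : ℝ) * ∏ p ∈ m.primeFactors, Real.log p) := by
  rw [sum_moebius_mul_log_div_pow (Nat.one_le_iff_ne_zero.mp hm)]
  refine ⟨fun hlt => ?_, fun _ hcard => ?_⟩
  · rw [alternatingPowerSum_of_le _ hlt.le, if_neg hlt.ne]
  · rw [alternatingPowerSum_of_le _ hcard.ge, if_pos hcard.symm]

/-- If `m` has more than `k` distinct prime factors then `∑_{d ∣ m} μ(d) (log(m/d))^k = 0`,
and if `m` is squarefree with exactly `k` distinct prime factors `p₁, …, p_k` then the sum
equals `k! (log p₁) ⋯ (log p_k)`. -/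
theorem moebius_log_sum (k m : ℕ) (hk : 1 ≤ k) (hm : 1 ≤ m) :
    (k < m.primeFactors.card →
      ∑ d ∈ m.divisors, (moebius d : ℝ) * (Real.log ((m : ℝ) / (d : ℝ))) ^ k = 0) ∧
    (Squarefree m → m.primeFactors.card = k →
      ∑ d ∈ m.divisors, (moebius d : ℝ) * (Real.log ((m : ℝ) / (d : ℝ))) ^ k =
        (k.factorial : ℝ) * ∏ p ∈ m.primeFactors, Real.log p) :=
  moebius_log_sum_general k m hm
end

section
/- Let k ≥ 2 be an integer and let Q be a real polynomial, not identically zero, with Q(0) = 0. Then ∫_0^1 (y^{k−2}/(k−2)!) Q(1−y)^2 dy < (4/k) ∫_0^1 (y^{k−1}/(k−1)!) Q'(1−y)^2 dy, where Q' denotes the derivative of Q. -/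
open Polynomial intervalIntegral

set_option maxHeartbeats 2000000

/-- For `k ≥ 2` and a real polynomial `Q ≠ 0` with `Q(0) = 0`,
`∫_0^1 (y^{k-2}/(k-2)!) Q(1-y)² dy < (4/k) ∫_0^1 (y^{k-1}/(k-1)!) Q'(1-y)² dy`. -/
theorem polynomial_integral_inequality (k : ℕ) (hk : 2 ≤ k) (Q : Polynomial ℝ)
    (hQ : Q ≠ 0) (hQ0 : Q.eval 0 = 0) :
    (∫ y in (0:ℝ)..1, y ^ (k - 2) / ((k - 2).factorial : ℝ) * (Q.eval (1 - y)) ^ 2) <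
      (4 / (k : ℝ)) *
        ∫ y in (0:ℝ)..1, y ^ (k - 1) / ((k - 1).factorial : ℝ) *
          ((Polynomial.derivative Q).eval (1 - y)) ^ 2 := by
  obtain ⟨e, rfl⟩ : ∃ e, k = e + 2 := ⟨k - 2, by omega⟩
  have he2 : e + 2 - 2 = e := by omega
  have he1 : e + 2 - 1 = e + 1 := by omega
  rw [he2, he1]
  set K : ℝ := ((e + 2 : ℕ) : ℝ) with hKdef
  have hKe : K = (e : ℝ) + 2 := by push_cast [hKdef]; ring
  have hK2 : (2:ℝ) ≤ K := by
    have : (0:ℝ) ≤ (e:ℝ) := Nat.cast_nonneg e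
    linarith [hKe]
  have hK0 : K ≠ 0 := by linarith
  have hK1 : K - 1 ≠ 0 := by linarith
  set F : Polynomial ℝ := Q.comp (Polynomial.C 1 - Polynomial.X) with hFdef
  have hFeval : ∀ y : ℝ, F.eval y = Q.eval (1 - y) := by
    intro y; simp [hFdef, Polynomial.eval_comp]
  have hFder : F.derivative = - Q.derivative.comp (Polynomial.C 1 - Polynomial.X) := by
    rw [hFdef, Polynomial.derivative_comp]; simp
  have hQd : ∀ y : ℝ, ((Polynomial.derivative Q).eval (1 - y))^2 = ((Polynomial.derivative F).eval y)^2 := by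
    intro y; rw [hFder]; simp [Polynomial.eval_comp]
  have hFne : F ≠ 0 := by
    intro h
    apply hQ
    have := congrArg (fun p => p.comp (Polynomial.C 1 - Polynomial.X)) h
    simpa [hFdef, Polynomial.comp_assoc] using this
  have hF1 : F.eval 1 = 0 := by rw [hFeval]; norm_num [hQ0]
  -- constants
  set Cp : ℝ := 4/(K*(K-1)) with hCp
  set Hc : ℝ := (3*K+4)/(4*K*(K-1)) with hHc
  have hHpos : 0 < Hc := by
    rw [hHc]; apply div_pos (by linarith) (by nlinarith)
  -- auxiliary polynomial
  set R : Polynomial ℝ := Polynomial.C (1/(K-1)) + Polynomial.C (1/(4*(K-1))) * Polynomial.X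
      + Polynomial.C ((3*K+8)/(4*K*(K-1))) * Polynomial.X^2 with hRdef
  set S : Polynomial ℝ := Polynomial.X^(e+1) * R * F^2 with hSdef
  -- FTC for S
  have hFTC : ∫ y in (0:ℝ)..1, (Polynomial.derivative S).eval y = S.eval 1 - S.eval 0 := by
    have hd : (deriv fun x : ℝ => S.eval x) = fun x => S.derivative.eval x :=
      funext fun x => Polynomial.deriv S
    have := intervalIntegral.integral_deriv_eq_sub (a := (0:ℝ)) (b := 1)
      (f := fun x => S.eval x) (fun x _ => (S.hasDerivAt x).differentiableAt)
      (by rw [hd]; exact (S.derivative.continuous_aeval).intervalIntegrable _ _)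
    rw [hd] at this; exact this
  have hS1 : S.eval 1 = 0 := by simp [hSdef, hF1]
  have hS0 : S.eval 0 = 0 := by simp [hSdef]
  rw [hS1, hS0, sub_zero] at hFTC
  -- derivative of S evaluated
  have hSd : ∀ y : ℝ, (Polynomial.derivative S).eval y =
      ((e:ℝ)+1)*y^e*((1/(K-1)) + (1/(4*(K-1)))*y + ((3*K+8)/(4*K*(K-1)))*y^2)*(F.eval y)^2
      + y^(e+1)*(((1/(4*(K-1))) + 2*((3*K+8)/(4*K*(K-1)))*y)*(F.eval y)^2
        + ((1/(K-1)) + (1/(4*(K-1)))*y + ((3*K+8)/(4*K*(K-1)))*y^2)*(2*(F.eval y)*((Polynomial.derivative F).eval y))) := by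
    intro y
    simp only [hSdef, hRdef, Polynomial.derivative_mul, Polynomial.derivative_X_pow,
      Polynomial.derivative_pow, Polynomial.derivative_add, Polynomial.derivative_C,
      Polynomial.derivative_X, Polynomial.eval_add, Polynomial.eval_mul, Polynomial.eval_pow,
      Polynomial.eval_C, Polynomial.eval_X, Nat.add_sub_cancel, Polynomial.eval_one, Polynomial.eval_zero]
    push_cast
    ring
  -- pointwise inequality
  have hpt : ∀ y ∈ Set.Icc (0:ℝ) 1, Hc*(y^e*y^2)*(F.eval y)^2 ≤
      Cp*y^(e+1)*((Polynomial.derivative F).eval y)^2 - y^e*(F.eval y)^2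
        + (Polynomial.derivative S).eval y := by
    rintro y ⟨hy0, hy1⟩
    rw [hSd y]
    set f := F.eval y with hf
    set fd := (Polynomial.derivative F).eval y with hfd
    have hpow : y^(e+1) = y^e*y := pow_succ y e
    rw [hpow]
    set ρ : ℝ := (1/(K-1)) + (1/(4*(K-1)))*y + ((3*K+8)/(4*K*(K-1)))*y^2 with hρ
    set ρd : ℝ := (1/(4*(K-1))) + 2*((3*K+8)/(4*K*(K-1)))*y with hρd
    set BR : ℝ := Cp*y*fd^2 - f^2 + (K-1)*ρ*f^2 + y*ρd*f^2 + 2*y*ρ*f*fd - Hc*y^2*f^2 with hBRdef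
    have hy2 : y^2 ≤ 1 := pow_le_one₀ hy0 hy1
    have hy3 : y^3 ≤ 1 := pow_le_one₀ hy0 hy1
    have hid : 64*K^2*(K-1)^2*BR = K*(K-1)*(y*(16*fd+(4*K+K*y+(3*K+8)*y^2)*f)^2
        + K*(25*K+64)*(y^2*(1-y))*f^2 + 2*K*(3*K+8)*(y^2*(1-y^2))*f^2
        + (3*K+8)^2*(y^2*(1-y^3))*f^2) := by
      rw [hBRdef, hρ, hρd, hCp, hHc]
      field_simp
      ring
    have hRHS : 0 ≤ K*(K-1)*(y*(16*fd+(4*K+K*y+(3*K+8)*y^2)*f)^2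
        + K*(25*K+64)*(y^2*(1-y))*f^2 + 2*K*(3*K+8)*(y^2*(1-y^2))*f^2
        + (3*K+8)^2*(y^2*(1-y^3))*f^2) := by
      have h1 : (0:ℝ) ≤ y * (16*fd+(4*K+K*y+(3*K+8)*y^2)*f)^2 := mul_nonneg hy0 (sq_nonneg _)
      have h2 : (0:ℝ) ≤ K*(25*K+64)*(y^2*(1-y))*f^2 :=
        mul_nonneg (mul_nonneg (mul_nonneg (by linarith) (by linarith))
          (mul_nonneg (sq_nonneg y) (by linarith))) (sq_nonneg f)
      have h3 : (0:ℝ) ≤ 2*K*(3*K+8)*(y^2*(1-y^2))*f^2 :=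
        mul_nonneg (mul_nonneg (mul_nonneg (by linarith) (by linarith))
          (mul_nonneg (sq_nonneg y) (by linarith))) (sq_nonneg f)
      have h4 : (0:ℝ) ≤ (3*K+8)^2*(y^2*(1-y^3))*f^2 :=
        mul_nonneg (mul_nonneg (sq_nonneg _)
          (mul_nonneg (sq_nonneg y) (by linarith))) (sq_nonneg f)
      have h5 : (0:ℝ) ≤ K*(K-1) := mul_nonneg (by linarith) (by linarith)
      exact mul_nonneg h5 (by linarith)
    have h64 : (0:ℝ) < 64*K^2*(K-1)^2 := by nlinarith
    have hBR : 0 ≤ BR := by nlinarith [hid, hRHS, h64]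
    have hKe1 : (e:ℝ) + 1 = K - 1 := by rw [hKe]; ring
    have hdiff : (Cp*(y^e*y)*fd^2 - y^e*f^2
        + (((e:ℝ)+1)*y^e*ρ*f^2 + (y^e*y)*(ρd*f^2 + ρ*(2*f*fd))))
        - Hc*(y^e*y^2)*f^2 = y^e * BR := by
      rw [hKe1, hBRdef]; ring
    have := mul_nonneg (pow_nonneg hy0 e) hBR
    linarith [hdiff, this]
  -- integrand functions
  set f1 : ℝ → ℝ := fun y => y^e*(F.eval y)^2 with hf1
  set f2 : ℝ → ℝ := fun y => y^(e+1)*((Polynomial.derivative F).eval y)^2 with hf2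
  have hc1 : Continuous f1 := by fun_prop
  have hc2 : Continuous f2 := by fun_prop
  have hcS : Continuous fun y : ℝ => (Polynomial.derivative S).eval y := S.derivative.continuous_aeval
  set g : ℝ → ℝ := fun y => Cp*(f2 y) - f1 y + (Polynomial.derivative S).eval y with hg
  have hcg : Continuous g := ((continuous_const.mul hc2).sub hc1).add hcS
  -- positivity of ∫ g
  obtain ⟨c, hcmem, hcne⟩ : ∃ c ∈ Set.Ioo (0:ℝ) 1, F.eval c ≠ 0 := by
    have hfin := Polynomial.finite_setOf_isRoot hFne
    have := (Set.Ioo_infinite (by norm_num : (0:ℝ) < 1)).exists_notMem_finite hfin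
    simpa [Polynomial.IsRoot] using this
  have hposg : 0 < ∫ y in (0:ℝ)..1, g y := by
    apply intervalIntegral.integral_pos (by norm_num) hcg.continuousOn
    · intro x hx
      have hx' : x ∈ Set.Icc (0:ℝ) 1 := ⟨hx.1.le, hx.2⟩
      have := hpt x hx'
      have h0 : 0 ≤ Hc*(x^e*x^2)*(F.eval x)^2 := by
        exact mul_nonneg (mul_nonneg hHpos.le (mul_nonneg (pow_nonneg hx.1.le e) (sq_nonneg x))) (sq_nonneg _)
      simp only [hg, hf1, hf2]
      linarith
    · refine ⟨c, ⟨hcmem.1.le, hcmem.2.le⟩, ?_⟩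
      have := hpt c ⟨hcmem.1.le, hcmem.2.le⟩
      have h0 : 0 < Hc*(c^e*c^2)*(F.eval c)^2 := by
        have hc2 : (0:ℝ) < (F.eval c)^2 :=
          lt_of_le_of_ne (sq_nonneg _) (Ne.symm (pow_ne_zero 2 hcne))
        exact mul_pos (mul_pos hHpos (mul_pos (pow_pos hcmem.1 e) (pow_pos hcmem.1 2))) hc2
      simp only [hg, hf1, hf2]
      linarith
  -- compute ∫ g
  have hi1 : IntervalIntegrable f1 MeasureTheory.volume 0 1 := hc1.intervalIntegrable _ _
  have hi2 : IntervalIntegrable (fun y => Cp * f2 y) MeasureTheory.volume 0 1 :=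
    (continuous_const.mul hc2).intervalIntegrable _ _
  have hiS : IntervalIntegrable (fun y : ℝ => (Polynomial.derivative S).eval y)
      MeasureTheory.volume 0 1 := hcS.intervalIntegrable _ _
  have hgval : (∫ y in (0:ℝ)..1, g y) =
      Cp * (∫ y in (0:ℝ)..1, f2 y) - (∫ y in (0:ℝ)..1, f1 y) := by
    rw [hg]
    rw [intervalIntegral.integral_add (hi2.sub hi1) hiS,
      intervalIntegral.integral_sub hi2 hi1, hFTC,
      intervalIntegral.integral_const_mul]
    ring
  set I1 : ℝ := ∫ y in (0:ℝ)..1, f1 y with hI1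
  set I2 : ℝ := ∫ y in (0:ℝ)..1, f2 y with hI2
  rw [hgval] at hposg
  -- rewrite goal integrals
  have ha : (0:ℝ) < (e.factorial : ℝ) := by exact_mod_cast e.factorial_pos
  have hb : (((e+1).factorial : ℕ) : ℝ) = (K - 1) * (e.factorial : ℝ) := by
    rw [Nat.factorial_succ]; push_cast; rw [hKe]; ring
  have hLHS : (∫ y in (0:ℝ)..1, y ^ e / ((e.factorial : ℕ) : ℝ) * (Q.eval (1 - y)) ^ 2)
      = (1/(e.factorial : ℝ)) * I1 := by
    rw [hI1, ← intervalIntegral.integral_const_mul]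
    apply intervalIntegral.integral_congr
    intro y _
    simp only [hf1]
    rw [← hFeval y]
    ring
  have hRHS2 : (∫ y in (0:ℝ)..1, y ^ (e+1) / (((e+1).factorial : ℕ) : ℝ) *
      ((Polynomial.derivative Q).eval (1 - y)) ^ 2)
      = (1/(((e+1).factorial : ℕ) : ℝ)) * I2 := by
    rw [hI2, ← intervalIntegral.integral_const_mul]
    apply intervalIntegral.integral_congr
    intro y _
    simp only [hf2]
    rw [hQd y]
    ring
  rw [hLHS, hRHS2, hb]
  have hfinal : (4 / K) * ((1/((K-1) * (e.factorial : ℝ))) * I2)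
      = (1/(e.factorial : ℝ)) * (Cp * I2) := by
    have hsc : (4 / K) * (1/((K-1) * (e.factorial : ℝ))) = (1/(e.factorial : ℝ)) * Cp := by
      rw [hCp]
      have hane : (e.factorial : ℝ) ≠ 0 := ne_of_gt ha
      field_simp
    rw [← mul_assoc, hsc, mul_assoc]
  rw [hfinal]
  have hfa : (0:ℝ) < 1 / (e.factorial : ℝ) := by positivity
  exact (mul_lt_mul_iff_right₀ hfa).mpr (by linarith)
end

section
/- Let k ≥ 2 and r ≥ 0 be integers and let P(y) = y^{k+r}. Then the ratio (∫_0^1 (y^{k−2}/(k−2)!) P^{(k−1)}(1−y)^2 dy) / (∫_0^1 (y^{k−1}/(k−1)!) P^{(k)}(1−y)^2 dy) equals 2(2r+1)/((r+1)(k+2r+1)), where P^{(j)} denotes the j-th derivative of P. -/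
lemma beta_nat (a b : ℕ) : ∫ x in (0:ℝ)..1, x ^ a * (1 - x) ^ b =
    (a.factorial * b.factorial : ℝ) / ((a + b + 1).factorial) := by
  induction b generalizing a with
  | zero =>
      simp only [pow_zero, mul_one, integral_pow, one_pow, Nat.factorial_zero, Nat.cast_one,
        Nat.add_zero, Nat.factorial_succ]
      rw [zero_pow (by omega), sub_zero]
      push_cast
      field_simp
  | succ b ih =>
      have ci : ∀ (m n : ℕ), IntervalIntegrable (fun x : ℝ => x ^ m * (1 - x) ^ n)
          MeasureTheory.volume 0 1 := fun m n =>
        (Continuous.mul (by continuity) (by continuity)).intervalIntegrable _ _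
      have key : (∫ x in (0:ℝ)..1, x ^ a * (1 - x) ^ (b + 1)) =
          (∫ x in (0:ℝ)..1, x ^ a * (1 - x) ^ b) -
            ∫ x in (0:ℝ)..1, x ^ (a + 1) * (1 - x) ^ b := by
        rw [← intervalIntegral.integral_sub (ci a b) (ci (a+1) b)]
        congr 1; ext x; ring
      rw [key, ih, ih]
      have e1 : a + 1 + b + 1 = (a + b + 1) + 1 := by omega
      have e2 : a + (b + 1) + 1 = (a + b + 1) + 1 := by omega
      rw [e1, e2, Nat.factorial_succ (a+b+1), Nat.factorial_succ a, Nat.factorial_succ b]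
      have h0 : ((a+b+1).factorial : ℝ) ≠ 0 := Nat.cast_ne_zero.mpr (Nat.factorial_ne_zero _)
      push_cast
      field_simp
      ring



/-- For `k ≥ 2`, `r ≥ 0` and `P(y) = y^{k+r}`, the ratio
`(∫_0^1 (y^{k-2}/(k-2)!) P^{(k-1)}(1-y)² dy) / (∫_0^1 (y^{k-1}/(k-1)!) P^{(k)}(1-y)² dy)`
equals `2(2r+1)/((r+1)(k+2r+1))`. -/
theorem beta_integral_ratio (k r : ℕ) (hk : 2 ≤ k) :
    (∫ y in (0:ℝ)..1, y ^ (k - 2) / ((k - 2).factorial : ℝ) *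
        ((Polynomial.derivative^[k - 1] (Polynomial.X ^ (k + r) : Polynomial ℝ)).eval (1 - y)) ^ 2) /
    (∫ y in (0:ℝ)..1, y ^ (k - 1) / ((k - 1).factorial : ℝ) *
        ((Polynomial.derivative^[k] (Polynomial.X ^ (k + r) : Polynomial ℝ)).eval (1 - y)) ^ 2) =
    2 * (2 * (r : ℝ) + 1) / (((r : ℝ) + 1) * ((k : ℝ) + 2 * (r : ℝ) + 1)) := by
  have h1 : k + r - (k - 1) = r + 1 := by omega
  have h2 : k + r - k = r := by omega
  set d1 : ℕ := (k + r).descFactorial (k - 1) with hd1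
  set d2 : ℕ := (k + r).descFactorial k with hd2
  have e1 : (∫ y in (0:ℝ)..1, y ^ (k - 2) / ((k - 2).factorial : ℝ) *
        ((Polynomial.derivative^[k - 1] (Polynomial.X ^ (k + r) : Polynomial ℝ)).eval (1 - y)) ^ 2)
      = ((d1:ℝ)^2 / (k-2).factorial) * ∫ y in (0:ℝ)..1, y ^ (k-2) * (1-y) ^ (2*r+2) := by
    rw [← intervalIntegral.integral_const_mul]
    congr 1; ext y
    rw [Polynomial.iterate_derivative_X_pow_eq_natCast_mul, h1]
    simp only [Polynomial.eval_mul, Polynomial.eval_pow, Polynomial.eval_natCast,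
      Polynomial.eval_X]
    rw [mul_pow, ← pow_mul, show (r+1)*2 = 2*r+2 from by ring]
    ring
  have e2 : (∫ y in (0:ℝ)..1, y ^ (k - 1) / ((k - 1).factorial : ℝ) *
        ((Polynomial.derivative^[k] (Polynomial.X ^ (k + r) : Polynomial ℝ)).eval (1 - y)) ^ 2)
      = ((d2:ℝ)^2 / (k-1).factorial) * ∫ y in (0:ℝ)..1, y ^ (k-1) * (1-y) ^ (2*r) := by
    rw [← intervalIntegral.integral_const_mul]
    congr 1; ext y
    rw [Polynomial.iterate_derivative_X_pow_eq_natCast_mul, h2]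
    simp only [Polynomial.eval_mul, Polynomial.eval_pow, Polynomial.eval_natCast,
      Polynomial.eval_X]
    rw [mul_pow, ← pow_mul, show r*2 = 2*r from by ring]
    ring
  rw [e1, e2, beta_nat, beta_nat]
  -- factorial index normalization
  rw [show (k-2) + (2*r+2) + 1 = (k + 2*r + 1) from by omega,
      show (k-1) + (2*r) + 1 = k + 2*r from by omega]
  -- descFactorial facts
  have f1 : ((r+1).factorial : ℝ) * (d1:ℝ) = ((k+r).factorial : ℝ) := by
    rw [hd1]
    exact_mod_cast congrArg (Nat.cast (R := ℝ)) (h1 ▸ Nat.factorial_mul_descFactorial (show k - 1 ≤ k + r by omega))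
  have f2 : ((r).factorial : ℝ) * (d2:ℝ) = ((k+r).factorial : ℝ) := by
    rw [hd2]
    exact_mod_cast congrArg (Nat.cast (R := ℝ)) (h2 ▸ Nat.factorial_mul_descFactorial (show k ≤ k + r by omega))
  -- expand factorials
  have g1 : ((k + 2*r + 1).factorial : ℝ) = (k + 2*(r:ℝ) + 1) * ((k + 2*r).factorial : ℝ) := by
    rw [show k + 2*r + 1 = (k + 2*r) + 1 from rfl, Nat.factorial_succ]; push_cast; ring
  have g2 : ((2*r+2).factorial : ℝ) = (2*(r:ℝ)+2) * (2*(r:ℝ)+1) * ((2*r).factorial : ℝ) := by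
    rw [show 2*r + 2 = (2*r+1) + 1 from rfl, Nat.factorial_succ, Nat.factorial_succ]
    push_cast; ring
  have g3 : ((k-1).factorial : ℝ) = ((k:ℝ)-1) * ((k-2).factorial : ℝ) := by
    rw [show k - 1 = (k-2) + 1 from by omega, Nat.factorial_succ]
    have : (((k-2) + 1 : ℕ) : ℝ) = (k:ℝ) - 1 := by
      have : k - 2 + 1 = k - 1 := by omega
      rw [this]; push_cast [Nat.cast_sub (by omega : 1 ≤ k)]; ring
    rw [Nat.cast_mul, this]
  have g4 : ((r+1).factorial : ℝ) = ((r:ℝ)+1) * (r.factorial : ℝ) := by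
    rw [Nat.factorial_succ]; push_cast; ring
  -- nonzero facts
  have n1 : ((k-2).factorial : ℝ) ≠ 0 := Nat.cast_ne_zero.mpr (Nat.factorial_ne_zero _)
  have n2 : ((k+2*r).factorial : ℝ) ≠ 0 := Nat.cast_ne_zero.mpr (Nat.factorial_ne_zero _)
  have n3 : ((2*r).factorial : ℝ) ≠ 0 := Nat.cast_ne_zero.mpr (Nat.factorial_ne_zero _)
  have n4 : ((k+r).factorial : ℝ) ≠ 0 := Nat.cast_ne_zero.mpr (Nat.factorial_ne_zero _)
  have n5 : (r.factorial : ℝ) ≠ 0 := Nat.cast_ne_zero.mpr (Nat.factorial_ne_zero _)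
  have n6 : ((k:ℝ) - 1) ≠ 0 := by
    have : (2:ℝ) ≤ (k:ℝ) := by exact_mod_cast hk
    linarith
  have n7 : ((r:ℝ) + 1) ≠ 0 := by positivity
  have n8 : ((k:ℝ) + 2*(r:ℝ) + 1) ≠ 0 := by positivity
  have hd1v : (d1:ℝ) = ((k+r).factorial : ℝ) / (((r:ℝ)+1) * (r.factorial : ℝ)) := by
    rw [← g4, eq_div_iff (by rw [g4]; positivity), mul_comm]
    exact f1
  have hd2v : (d2:ℝ) = ((k+r).factorial : ℝ) / (r.factorial : ℝ) := by
    rw [eq_div_iff n5, mul_comm]; exact f2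
  rw [hd1v, hd2v, g1, g2, g3]
  field_simp
end

section
/- Let p be a prime with p ≡ 3 (mod 40) such that q = 2p + 1 is also prime. Then 10 is a primitive root modulo q; that is, the multiplicative order of 10 in (ℤ/qℤ)× equals q − 1 = 2p. -/
/-- If `p ≡ 3 (mod 40)` is prime and `q = 2p + 1` is also prime, then `10` is a primitive
root modulo `q`: the multiplicative order of `10` in `(ℤ/qℤ)ˣ` equals `q - 1 = 2p`. -/
theorem ten_is_primitive_root (p : ℕ) (hp : p.Prime) (hmod : p % 40 = 3)
    (hq : (2 * p + 1).Prime) :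
    orderOf (10 : ZMod (2 * p + 1)) = 2 * p := by
  haveI : Fact (2 * p + 1).Prime := ⟨hq⟩
  set q := 2 * p + 1 with hqdef
  haveI : Fact (2 < q) := ⟨by omega⟩
  have hp3 : 3 ≤ p := by omega
  have hq8 : q % 8 = 7 := by omega
  have hq2 : q ≠ 2 := by omega
  have hpodd : p % 2 = 1 := by omega
  have h2 : legendreSym q 2 = 1 := by
    rw [legendreSym.at_two hq2]
    have : (q : ZMod 8) = 7 := by rw [← ZMod.natCast_mod, hq8]; rfl
    rw [this]; decide
  have h5 : legendreSym q 5 = -1 := by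
    haveI : Fact (Nat.Prime 5) := ⟨by norm_num⟩
    have h := legendreSym.quadratic_reciprocity_one_mod_four (p := 5) (q := q)
      (by norm_num) hq2
    rw [legendreSym.mod 5 (q : ℤ)] at h
    have hm : (q : ℤ) % ((5 : ℕ) : ℤ) = 2 := by push_cast; omega
    rw [hm] at h
    norm_num at h
    exact_mod_cast h
  have h10 : legendreSym q 10 = -1 := by
    have e : (10 : ℤ) = 2 * 5 := by norm_num
    rw [e, legendreSym.mul, h2, h5]; ring
  have hkey : (10 : ZMod q) ^ p = -1 := by
    have h := legendreSym.eq_pow q 10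
    rw [h10] at h
    have hq2' : q / 2 = p := by omega
    rw [hq2'] at h
    push_cast at h
    exact h.symm
  have hne : (-1 : ZMod q) ≠ 1 := ZMod.neg_one_ne_one
  have h2p : (10 : ZMod q) ^ (2 * p) = 1 := by
    rw [two_mul, pow_add, hkey]; ring
  apply orderOf_eq_of_pow_and_pow_div_prime (by omega) h2p
  intro r hr hrd hpow
  have hr2p : r = 2 ∨ r = p := by
    rcases (Nat.Prime.dvd_mul hr).mp hrd with h | h
    · left; exact (Nat.prime_dvd_prime_iff_eq hr Nat.prime_two).mp h
    · right; exact (Nat.prime_dvd_prime_iff_eq hr hp).mp h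
  rcases hr2p with rfl | rfl
  · have e : 2 * p / 2 = p := by omega
    rw [e, hkey] at hpow
    exact hne hpow
  · have e : 2 * r / r = 2 := Nat.mul_div_cancel 2 hp.pos
    rw [e] at hpow
    have hexp : r = 2 * ((r - 1) / 2) + 1 := by omega
    have h10p : (10 : ZMod q) ^ r = 10 := by
      rw [hexp, pow_succ, pow_mul, hpow, one_pow, one_mul]
    rw [h10p] at hkey
    have h11 : ((11 : ℕ) : ZMod q) = 0 := by push_cast; linear_combination hkey
    have hdvd : q ∣ 11 := (ZMod.natCast_eq_zero_iff 11 q).mp h11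
    have : q ≤ 11 := Nat.le_of_dvd (by norm_num) hdvd
    interval_cases q <;> omega
end

section
/- Assume the Hardy–Littlewood prime k-tuples conjecture: for every finite set H = {h_1, …, h_k} of positive integers with 𝔖(H) ≠ 0, the number of integers n ≤ x such that n + h_1, …, n + h_k are all prime is asymptotic to 𝔖(H) · x/(log x)^k as x → ∞. Then for every integer r ≥ 1 there exist infinitely many primes p with p_next − p = 2r; that is, every positive even number occurs infinitely often as a gap between consecutive primes. -/
/-!
Under Hardy–Littlewood, the number of `n ≤ x` with `n + 1` and `n + 2r + 1` both prime is
`~ 𝔖 x / (log x)²` with `𝔖 > 0`, because `{1, 2r + 1}` is admissible. If these two primes are not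
consecutive, then some `n + h` with `1 < h < 2r + 1` is prime as well. Each triple
`{1, h, 2r + 1}` is realised only `O(x / (log x)³)` times when it is admissible, and only
boundedly often when it is not. So if only finitely many gaps equal `2r`, the pairs are
`o(x / (log x)²)`, which is a contradiction.
-/

open Filter

/-- The smallest prime strictly greater than `p`. -/
noncomputable def nextPrime (p : ℕ) : ℕ := sInf {q : ℕ | q.Prime ∧ p < q}

/-- `ν_H(ℓ)`: the number of distinct residue classes modulo `ℓ` occupied by elements of `H`. -/
def nu (H : Finset ℕ) (ℓ : ℕ) : ℕ := (H.image (fun h : ℕ => (h : ZMod ℓ))).card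

/-- The number of `n ≤ x` such that `n + h` is prime for all `h ∈ H`. -/
noncomputable def tupleCount (x : ℝ) (H : Finset ℕ) : ℕ :=
  ((Finset.Icc 1 ⌊x⌋₊).filter (fun n => ∀ h ∈ H, (n + h).Prime)).card

/-- The Hardy–Littlewood prime `k`-tuples conjecture: for every finite set `H` of positive
integers whose singular series `𝔖(H)` (the limit `S` of the partial products) is nonzero,
the number of `n ≤ x` with `n + h` prime for all `h ∈ H` is asymptotic to
`𝔖(H) · x / (log x)^{|H|}`. -/
def HardyLittlewood : Prop :=
  ∀ H : Finset ℕ, H.Nonempty → (∀ h ∈ H, 0 < h) →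
    ∀ S : ℝ, Tendsto (fun X : ℕ =>
        ∏ ℓ ∈ (Finset.range (X + 1)).filter Nat.Prime,
          (1 - (nu H ℓ : ℝ) / (ℓ : ℝ)) * ((1 - (ℓ : ℝ)⁻¹) ^ H.card)⁻¹) atTop (nhds S) →
      S ≠ 0 →
      Tendsto (fun x : ℝ => (tupleCount x H : ℝ) * (Real.log x) ^ H.card / (S * x))
        atTop (nhds 1)

open Finset Real Topology

/-- Equivalently, `𝔖(H) ≠ 0`. -/
def Admissible (H : Finset ℕ) : Prop := ∀ ℓ, ℓ.Prime → nu H ℓ < ℓ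

noncomputable def singularFactor (H : Finset ℕ) (ℓ : ℕ) : ℝ :=
  (1 - (nu H ℓ : ℝ) / ℓ) * ((1 - (ℓ : ℝ)⁻¹) ^ H.card)⁻¹

section Nu

variable {H : Finset ℕ} {ℓ : ℕ}

theorem nu_le_card : nu H ℓ ≤ H.card := card_image_le

theorem nu_le [NeZero ℓ] : nu H ℓ ≤ ℓ :=
  (card_le_univ _).trans_eq (ZMod.card ℓ)

theorem nu_eq_card_of_forall_lt (hH : ∀ h ∈ H, h < ℓ) : nu H ℓ = H.card :=
  card_image_of_injOn fun a ha b hb hab => by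
    simpa [ZMod.val_natCast_of_lt (hH a ha), ZMod.val_natCast_of_lt (hH b hb)] using
      congrArg ZMod.val hab

theorem admissible_pair_of_even {d : ℕ} (hd : Even d) : Admissible {1, d + 1} := by
  intro ℓ hℓ
  rcases hℓ.eq_two_or_odd' with rfl | hodd
  · have hd2 : ((d + 1 : ℕ) : ZMod 2) = 1 := by
      rw [Nat.cast_add, (ZMod.natCast_eq_zero_iff_even).mpr hd, Nat.cast_one, zero_add]
    simp [nu, hd2]
  · have h3 : 3 ≤ ℓ := by have := hℓ.two_le; rcases hodd with ⟨k, rfl⟩; omega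
    exact nu_le_card.trans_lt (card_le_two.trans_lt h3)

/-- A prime `ℓ` with `ν_H(ℓ) = ℓ` divides one of the `n + h`, which forces `n + h = ℓ`. -/
theorem tupleCount_le_of_nu_eq (hℓ : ℓ.Prime) (hnu : nu H ℓ = ℓ) (x : ℝ) :
    tupleCount x H ≤ ℓ := by
  have : NeZero ℓ := ⟨hℓ.ne_zero⟩
  have hsurj : H.image (fun h : ℕ => (h : ZMod ℓ)) = univ :=
    eq_univ_of_card _ (by rw [ZMod.card]; exact hnu)
  calc tupleCount x H ≤ (Icc 1 ℓ).card := by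
        refine card_le_card fun n hn => ?_
        obtain ⟨⟨hn1, -⟩, hprime⟩ := by simpa only [mem_filter, mem_Icc] using hn
        obtain ⟨h, hh, hcast⟩ := mem_image.mp (hsurj ▸ mem_univ (-(n : ZMod ℓ)))
        have hdvd : ℓ ∣ n + h := by
          rw [← ZMod.natCast_eq_zero_iff, Nat.cast_add, hcast, add_neg_cancel]
        have := (Nat.prime_dvd_prime_iff_eq hℓ (hprime h hh)).mp hdvd
        exact mem_Icc.mpr ⟨hn1, by omega⟩
    _ = ℓ := by simp

end Nu

section SingularSeries

theorem one_sub_pow_le {t : ℝ} (ht0 : 0 ≤ t) (ht1 : t ≤ 1) (k : ℕ) :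
    (1 - t) ^ k ≤ 1 - k * t + k ^ 2 * t ^ 2 := by
  induction k with
  | zero => simp
  | succ k ih =>
    rw [pow_succ]
    push_cast
    nlinarith [mul_le_mul_of_nonneg_right ih (sub_nonneg.mpr ht1), pow_nonneg ht0 3,
      mul_nonneg (Nat.cast_nonneg (α := ℝ) k) (sq_nonneg t)]

theorem abs_one_sub_mul_mul_inv_one_sub_pow_sub_one_le {k : ℕ} {t : ℝ} (ht0 : 0 ≤ t)
    (ht1 : t ≤ 1) (hkt : 2 * k * t ≤ 1) :
    |(1 - k * t) * ((1 - t) ^ k)⁻¹ - 1| ≤ 2 * k ^ 2 * t ^ 2 := by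
  have hlow : 1 - k * t ≤ (1 - t) ^ k := by
    simpa [sub_eq_add_neg] using one_add_mul_le_pow (a := -t) (by linarith) k
  have hup := one_sub_pow_le ht0 ht1 k
  have hP : 0 < (1 - t) ^ k := by linarith
  rw [← div_eq_mul_inv, div_sub_one hP.ne', abs_le, le_div_iff₀ hP, div_le_iff₀ hP]
  constructor <;> nlinarith

theorem abs_singularFactor_sub_one_le {H : Finset ℕ} {ℓ : ℕ} (hH : ∀ h ∈ H, h < ℓ)
    (hℓ : 2 * H.card < ℓ) : |singularFactor H ℓ - 1| ≤ 2 * H.card ^ 2 * (1 / (ℓ : ℝ) ^ 2) := by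
  have hℓ0 : (0 : ℝ) < ℓ := by exact_mod_cast (Nat.zero_le _).trans_lt hℓ
  have hkt : 2 * (H.card : ℝ) * (ℓ : ℝ)⁻¹ ≤ 1 := by
    rw [← div_eq_mul_inv, div_le_one hℓ0]
    exact_mod_cast hℓ.le
  have := abs_one_sub_mul_mul_inv_one_sub_pow_sub_one_le (inv_nonneg.mpr hℓ0.le)
    (inv_le_one_of_one_le₀ (by exact_mod_cast (Nat.zero_le _).trans_lt hℓ)) hkt
  rw [inv_pow] at this
  rwa [singularFactor, nu_eq_card_of_forall_lt hH, div_eq_mul_inv, one_div]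

theorem summable_singularFactor_sub_one (H : Finset ℕ) :
    Summable fun ℓ => singularFactor H ℓ - 1 := by
  refine ((Real.summable_one_div_nat_pow.mpr one_lt_two).mul_left
    (2 * (H.card : ℝ) ^ 2)).of_norm_bounded_eventually_nat ?_
  filter_upwards [eventually_gt_atTop (H.sup id + 2 * H.card)] with ℓ hℓ
  exact abs_singularFactor_sub_one_le (fun h hh => (le_sup (f := id) hh).trans_lt (by omega))
    (by omega)

theorem singularFactor_pos {H : Finset ℕ} (hH : Admissible H) {ℓ : ℕ} (hℓ : ℓ.Prime) :
    0 < singularFactor H ℓ := by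
  have hℓ1 : (1 : ℝ) < ℓ := by exact_mod_cast hℓ.one_lt
  have hnu : (nu H ℓ : ℝ) < ℓ := by exact_mod_cast hH ℓ hℓ
  have : 0 < 1 - (ℓ : ℝ)⁻¹ := sub_pos.mpr (inv_lt_one_of_one_lt₀ hℓ1)
  have : 0 < 1 - (nu H ℓ : ℝ) / ℓ := sub_pos.mpr ((div_lt_one (by linarith)).mpr hnu)
  unfold singularFactor
  positivity

/-- The partial products equal `exp` of partial sums of logarithms, and these sums converge since
`log (1 + u)` is summable whenever `u` is. -/
theorem exists_tendsto_prod_singularFactor {H : Finset ℕ} (hH : Admissible H) :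
    ∃ S > 0, Tendsto (fun X : ℕ => ∏ ℓ ∈ (range (X + 1)).filter Nat.Prime, singularFactor H ℓ)
      atTop (𝓝 S) := by
  set f : ℕ → ℝ := fun ℓ => if ℓ.Prime then singularFactor H ℓ else 1 with hf
  have hf_pos : ∀ ℓ, 0 < f ℓ := fun ℓ => by
    by_cases hℓ : ℓ.Prime
    · simpa [f, hℓ] using singularFactor_pos hH hℓ
    · simp [f, hℓ]
  have hlog : Summable fun ℓ => log (f ℓ) := by
    convert Real.summable_log_one_add_of_summable
      ((summable_singularFactor_sub_one H).indicator {ℓ | ℓ.Prime}) using 2 with ℓ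
    by_cases hℓ : ℓ.Prime <;> simp [f, hℓ]
  have hprod : ∀ X, ∏ ℓ ∈ (range (X + 1)).filter Nat.Prime, singularFactor H ℓ =
      exp (∑ ℓ ∈ range (X + 1), log (f ℓ)) := fun X => by
    rw [prod_filter, exp_sum]
    exact prod_congr rfl fun ℓ _ => (exp_log (hf_pos ℓ)).symm
  refine ⟨exp (∑' ℓ, log (f ℓ)), exp_pos _, ?_⟩
  simp_rw [hprod]
  exact (continuous_exp.tendsto _).comp (hlog.tendsto_sum_tsum_nat.comp (tendsto_add_atTop_nat 1))

end SingularSeries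

namespace HardyLittlewood

theorem tendsto_tupleCount_of_admissible (hHL : HardyLittlewood) {H : Finset ℕ}
    (hne : H.Nonempty) (hpos : ∀ h ∈ H, 0 < h) (hadm : Admissible H) :
    ∃ S > 0, Tendsto (fun x : ℝ => (tupleCount x H : ℝ) * log x ^ H.card / x) atTop (𝓝 S) := by
  obtain ⟨S, hS, hprod⟩ := exists_tendsto_prod_singularFactor hadm
  refine ⟨S, hS, ?_⟩
  have hHL' := (hHL H hne hpos S hprod hS.ne').mul_const S
  rw [one_mul] at hHL'
  refine hHL'.congr' ?_
  filter_upwards [eventually_gt_atTop 0] with x hx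
  field_simp

theorem tendsto_tupleCount_mul_log_pow_div_zero (hHL : HardyLittlewood) {H : Finset ℕ}
    (hne : H.Nonempty) (hpos : ∀ h ∈ H, 0 < h) {j : ℕ} (hj : j < H.card) :
    Tendsto (fun x : ℝ => (tupleCount x H : ℝ) * log x ^ j / x) atTop (𝓝 0) := by
  by_cases hadm : Admissible H
  · obtain ⟨S, -, hS⟩ := hHL.tendsto_tupleCount_of_admissible hne hpos hadm
    have hinv : Tendsto (fun x => (log x ^ (H.card - j))⁻¹) atTop (𝓝 0) :=
      ((tendsto_pow_atTop (by omega)).comp tendsto_log_atTop).inv_tendsto_atTop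
    have hmul := hS.mul hinv
    rw [mul_zero] at hmul
    refine hmul.congr' ?_
    filter_upwards [eventually_gt_atTop 1] with x hx
    have hlog : log x ≠ 0 := (log_pos hx).ne'
    rw [← Nat.add_sub_cancel' hj.le, pow_add, Nat.add_sub_cancel_left]
    field_simp
  · obtain ⟨ℓ, hℓ, hnu⟩ : ∃ ℓ, ℓ.Prime ∧ nu H ℓ = ℓ := by
      simp only [Admissible, not_forall, not_lt] at hadm
      obtain ⟨ℓ, hℓ, hle⟩ := hadm
      have : NeZero ℓ := ⟨hℓ.ne_zero⟩
      exact ⟨ℓ, hℓ, le_antisymm nu_le hle⟩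
    have hlog := (tendsto_pow_log_div_mul_add_atTop 1 0 j one_ne_zero).const_mul (ℓ : ℝ)
    simp only [one_mul, add_zero, mul_zero] at hlog
    refine squeeze_zero' ?_ ?_ hlog
    · filter_upwards [eventually_gt_atTop 1] with x hx
      have := log_pos hx
      positivity
    · filter_upwards [eventually_gt_atTop 1] with x hx
      have := log_pos hx
      rw [mul_div_assoc]
      gcongr
      exact_mod_cast tupleCount_le_of_nu_eq hℓ hnu x

end HardyLittlewood

theorem nextPrime_eq_of_not_prime_between {p q : ℕ} (hq : q.Prime) (hpq : p < q)
    (hgap : ∀ m, p < m → m < q → ¬ m.Prime) : nextPrime p = q := by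
  have hmem : q ∈ {q : ℕ | q.Prime ∧ p < q} := ⟨hq, hpq⟩
  obtain ⟨hprime, hlt⟩ := Nat.sInf_mem ⟨q, hmem⟩
  exact le_antisymm (Nat.sInf_le hmem) (not_lt.mp fun h => hgap _ hlt h hprime)

/-- Unless `n + 1` and `n + d + 1` are consecutive primes, some `n + h` with `1 < h < d + 1` is
prime as well. -/
theorem tupleCount_pair_le {d : ℕ} (hd : 0 < d) {E : Finset ℕ}
    (hE : ∀ p, p.Prime → nextPrime p = p + d → p ∈ E) (x : ℝ) :
    tupleCount x {1, d + 1} ≤ ∑ h ∈ Ioo 1 (d + 1), tupleCount x {1, h, d + 1} + E.card := by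
  have hsub : (Icc 1 ⌊x⌋₊).filter (fun n => ∀ h ∈ ({1, d + 1} : Finset ℕ), (n + h).Prime) ⊆
      (Ioo 1 (d + 1)).biUnion (fun h => (Icc 1 ⌊x⌋₊).filter
        fun n => ∀ h' ∈ ({1, h, d + 1} : Finset ℕ), (n + h').Prime) ∪ E.image (· - 1) := by
    intro n hn
    simp only [mem_filter, mem_insert, mem_singleton, forall_eq_or_imp, forall_eq] at hn
    obtain ⟨hn, hp, hq⟩ := hn
    by_cases hbetween : ∃ m, n + 1 < m ∧ m < n + (d + 1) ∧ m.Prime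
    · obtain ⟨m, hm1, hm2, hm⟩ := hbetween
      refine mem_union_left _ (mem_biUnion.mpr ⟨m - n, mem_Ioo.mpr ⟨by omega, by omega⟩, ?_⟩)
      simp only [mem_filter, mem_insert, mem_singleton, forall_eq_or_imp, forall_eq]
      exact ⟨hn, hp, by rwa [Nat.add_sub_cancel' (by omega)], hq⟩
    · push Not at hbetween
      refine mem_union_right _ (mem_image.mpr ⟨n + 1, hE _ hp ?_, rfl⟩)
      rw [nextPrime_eq_of_not_prime_between hq (by omega) hbetween]
      ring
  calc tupleCount x {1, d + 1} ≤ _ := card_le_card hsub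
    _ ≤ _ := (card_union_le _ _).trans (add_le_add card_biUnion_le card_image_le)

/-- Assuming the Hardy–Littlewood conjecture, every positive even number `2r` occurs
infinitely often as a gap between consecutive primes. -/
theorem every_even_gap_of_HL (hHL : HardyLittlewood) (r : ℕ) (hr : 1 ≤ r) :
    {p : ℕ | p.Prime ∧ nextPrime p = p + 2 * r}.Infinite := by
  intro hfin
  obtain ⟨S, hS, hpair⟩ := hHL.tendsto_tupleCount_of_admissible (insert_nonempty _ _) (by simp)
    (admissible_pair_of_even (even_two_mul r))
  rw [card_pair (by omega)] at hpair
  have htriples : ∀ h ∈ Ioo 1 (2 * r + 1), Tendsto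
      (fun x : ℝ => (tupleCount x {1, h, 2 * r + 1} : ℝ) * log x ^ 2 / x) atTop (𝓝 0) := by
    intro h hh
    rw [mem_Ioo] at hh
    refine hHL.tendsto_tupleCount_mul_log_pow_div_zero (insert_nonempty _ _)
      (by simp only [mem_insert, mem_singleton, forall_eq_or_imp, forall_eq]; omega) ?_
    rw [card_insert_of_notMem (by simp only [mem_insert, mem_singleton]; omega),
      card_pair (by omega)]
    norm_num
  have hexceptional := (tendsto_pow_log_div_mul_add_atTop 1 0 2 one_ne_zero).const_mul
    (hfin.toFinset.card : ℝ)
  have hbound := (tendsto_finsetSum _ htriples).add hexceptional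
  simp only [sum_const_zero, one_mul, add_zero, mul_zero] at hbound
  refine hS.not_ge (le_of_tendsto_of_tendsto hpair hbound ?_)
  filter_upwards [eventually_gt_atTop 0] with x hx
  have hcount := tupleCount_pair_le (d := 2 * r) (by omega) (E := hfin.toFinset)
    (fun p hp hgap => by simpa using ⟨hp, hgap⟩) x
  rw [← sum_div, mul_div_assoc', ← add_div, ← sum_mul, ← add_mul]
  gcongr
  exact_mod_cast hcount
end
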